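/- Let $L$ be a module lattice of rank $r$ over a number field $K$ of degree $d$, let $n$ be an integer with $n \ge 2$, and suppose $\lambda^K_{k+1}(L) \ge n\,\lambda^K_k(L)$ for some $k < r$. Let $M \subseteq L$ be the primitive rank-$k$ sub-module containing all vectors of length at most $\lambda^K_k(L)$, and let $L_n \subseteq L$ be a sub-module of rank $r$ such that $L/L_n \cong (\mathbb{Z}_K/n\mathbb{Z}_K)^k$ and $nM$ is primitive in $L_n$. Then $\lambda^K_i(L_n) = n\,\lambda^K_i(L)$ for $i = 1, \ldots, k$, and $\lambda^K_i(L) \le \lambda^K_i(L_n) \le \left(1 + \frac{\Gamma_K\sqrt{kd}}{2}\right)\lambda^K_i(L)$ for $i = k+1, \ldots, r$. -/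

import Mathlib

open scoped NumberField

set_option synthInstance.maxHeartbeats 1000000
set_option maxHeartbeats 1000000

/-- The `j`-th successive minimum of a set `M` (w.r.t. `R`-linear independence). -/
noncomputable def succMin (R : Type*) [Semiring R] {V : Type*} [NormedAddCommGroup V]
    [Module R V] (M : Set V) (j : ℕ) : ℝ :=
  sInf {lam : ℝ | 0 < lam ∧ ∃ v : Fin j → V,
    (∀ i, v i ∈ M) ∧ LinearIndependent R v ∧ ∀ i, ‖v i‖ ≤ lam}

/-- A sub-module `N` of a module lattice `L` is primitive if
`N = L ∩ Span_K(N)`. -/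
def IsPrimitiveIn {K : Type*} [Field K] [NumberField K]
    {V : Type*} [AddCommGroup V] [Module K V] [Module (𝓞 K) V]
    [IsScalarTower (𝓞 K) K V]
    (N L : Submodule (𝓞 K) V) : Prop :=
  N = L ⊓ (Submodule.span K (N : Set V)).restrictScalars (𝓞 K)

/-!
Vectors of `L_n` shorter than `λ_{k+1}(L)` lie in `L_n ∩ span_K M = nM ⊆ nL ⊆ L_n`; hence
`λ_i(L_n) = n λ_i(L)` for `i ≤ k`.

For `i > k`, the map `M / nM → L / L_n` is injective and `|M / nM| ≥ n^{kd} = |L / L_n|`, so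
`L = M + L_n`. Pick a `K`-basis `y_1, …, y_k ∈ L` of `span_K M` with `‖y_j‖ ≤ λ_k(L)`. The bound
`Γ` gives, inside each `𝓞_K n y_j ⊆ nM`, `d` short `ℚ`-independent vectors; together they span
`span_K M` over `ℚ`, so Babai's nearest plane algorithm rounds the `M`-component of any `x ∈ L`
into `nM` at cost `≤ Γ √(kd)/2 · n λ_k(L) ≤ Γ √(kd)/2 · λ_i(L)`. Applied to `i` independent
vectors of length `≤ λ_i(L)`, this yields vectors of `L_n` which, with the `n y_j ∈ L_n`, span a
space of dimension `≥ i`.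
-/

open Submodule Module Set
open scoped Pointwise

def succMinRadii (R : Type*) [Semiring R] {V : Type*} [NormedAddCommGroup V] [Module R V]
    (M : Set V) (j : ℕ) : Set ℝ :=
  {lam : ℝ | 0 < lam ∧ ∃ v : Fin j → V,
    (∀ i, v i ∈ M) ∧ LinearIndependent R v ∧ ∀ i, ‖v i‖ ≤ lam}

section SuccMin

variable {R V : Type*} [NormedAddCommGroup V] {M N : Set V} {i j : ℕ} {lam c : ℝ}

section Semiring

variable [Semiring R] [Module R V]

theorem succMin_eq_sInf : succMin R M j = sInf (succMinRadii R M j) := rfl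

theorem succMin_le_of_mem (h : lam ∈ succMinRadii R M j) : succMin R M j ≤ lam :=
  csInf_le ⟨0, fun _ h ↦ h.1.le⟩ h

theorem le_succMin (hne : (succMinRadii R M j).Nonempty)
    (h : ∀ lam ∈ succMinRadii R M j, c ≤ lam) : c ≤ succMin R M j :=
  le_csInf hne h

theorem succMinRadii_nonempty {r : ℕ} (v : Fin r → V) (hvM : ∀ i, v i ∈ M)
    (hv : LinearIndependent R v) (hj : j ≤ r) : (succMinRadii R M j).Nonempty :=
  ⟨1 + ∑ i, ‖v i‖, by positivity, v ∘ Fin.castLE hj, fun _ ↦ hvM _,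
    hv.comp _ (Fin.castLE_injective hj), fun i ↦ le_add_of_nonneg_of_le zero_le_one
      (Finset.single_le_sum (fun i _ ↦ norm_nonneg (v i)) (Finset.mem_univ _))⟩

theorem succMinRadii_subset_of_le (h : i ≤ j) : succMinRadii R M j ⊆ succMinRadii R M i := by
  rintro lam ⟨hlam, v, hvM, hv, hvn⟩
  exact ⟨hlam, v ∘ Fin.castLE h, fun _ ↦ hvM _, hv.comp _ (Fin.castLE_injective h), fun _ ↦ hvn _⟩

theorem succMin_le_of_le (h : i ≤ j) (hne : (succMinRadii R M j).Nonempty) :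
    succMin R M i ≤ succMin R M j :=
  csInf_le_csInf ⟨0, fun _ h ↦ h.1.le⟩ hne (succMinRadii_subset_of_le h)

theorem succMinRadii_subset_of_subset (h : M ⊆ N) : succMinRadii R M j ⊆ succMinRadii R N j := by
  rintro lam ⟨hlam, v, hvM, hv, hvn⟩
  exact ⟨hlam, v, fun i ↦ h (hvM i), hv, hvn⟩

theorem succMin_le_of_subset (h : M ⊆ N) (hne : (succMinRadii R M j).Nonempty) :
    succMin R N j ≤ succMin R M j :=
  csInf_le_csInf ⟨0, fun _ h ↦ h.1.le⟩ hne (succMinRadii_subset_of_subset h)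

theorem succMin_le_add_of_forall {ρ : ℝ} (hne : (succMinRadii R M j).Nonempty)
    (h : ∀ lam ∈ succMinRadii R M j, succMin R N j ≤ lam + ρ) :
    succMin R N j ≤ succMin R M j + ρ :=
  sub_le_iff_le_add.mp <| le_succMin hne fun lam hlam ↦ sub_le_iff_le_add.mpr (h lam hlam)

theorem exists_linearIndependent_of_succMin_lt (hne : (succMinRadii R M j).Nonempty)
    (h : succMin R M j < c) :
    ∃ v : Fin j → V, (∀ i, v i ∈ M) ∧ LinearIndependent R v ∧ ∀ i, ‖v i‖ < c := by
  obtain ⟨lam, ⟨-, v, hvM, hv, hvn⟩, hlam⟩ := exists_lt_of_csInf_lt hne h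
  exact ⟨v, hvM, hv, fun i ↦ (hvn i).trans_lt hlam⟩

theorem le_succMin_of_forall_norm_lt_mem (hne : (succMinRadii R N j).Nonempty)
    (h : ∀ x ∈ N, ‖x‖ < c → x ∈ M) (hc : succMin R M j ≤ c) :
    succMin R M j ≤ succMin R N j := by
  refine le_succMin hne fun lam ⟨hlam, v, hvN, hv, hvn⟩ ↦ le_of_not_gt fun hlt ↦ hlt.not_ge ?_
  exact succMin_le_of_mem
    ⟨hlam, v, fun i ↦ h _ (hvN i) ((hvn i).trans_lt (hlt.trans_le hc)), hv, hvn⟩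

end Semiring

section Ring

variable [Ring R] [Module R V]

theorem succMinRadii_image_eq_smul (f : V →ₗ[R] V) {a : ℝ} (ha : 0 < a)
    (hf : ∀ x, ‖f x‖ = a * ‖x‖) : succMinRadii R (f '' M) j = a • succMinRadii R M j := by
  have hker : LinearMap.ker f = ⊥ := LinearMap.ker_eq_bot'.mpr fun x hx ↦ by
    simpa [hx, ha.ne'] using (hf x).symm
  ext lam
  constructor
  · rintro ⟨hlam, v, hvM, hv, hvn⟩
    choose w hwM hwv using hvM
    have hfw : f ∘ w = v := funext hwv
    refine ⟨lam / a, ⟨by positivity, w, hwM, .of_comp f (hfw ▸ hv), fun i ↦ ?_⟩, ?_⟩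
    · rw [le_div_iff₀' ha, ← hf, hwv]
      exact hvn i
    · simp [smul_eq_mul, mul_div_cancel₀ _ ha.ne']
  · rintro ⟨mu, ⟨hmu, w, hwM, hw, hwn⟩, rfl⟩
    refine ⟨by simp only [smul_eq_mul]; positivity, f ∘ w, fun i ↦ ⟨w i, hwM i, rfl⟩,
      hw.map' f hker, fun i ↦ ?_⟩
    simp only [Function.comp_apply, hf, smul_eq_mul]
    exact mul_le_mul_of_nonneg_left (hwn i) ha.le

theorem succMin_image_eq_mul (f : V →ₗ[R] V) {a : ℝ} (ha : 0 < a) (hf : ∀ x, ‖f x‖ = a * ‖x‖) :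
    succMin R (f '' M) j = a * succMin R M j := by
  rw [succMin_eq_sInf, succMinRadii_image_eq_smul f ha hf, Real.sInf_smul_of_nonneg ha.le,
    smul_eq_mul, succMin_eq_sInf]

theorem succMin_eq_mul_of_forall_norm_lt_mem_image (f : V →ₗ[R] V) {a : ℝ} (ha : 0 < a)
    (hf : ∀ x, ‖f x‖ = a * ‖x‖) (hfMN : f '' M ⊆ N) (hN : ∀ x ∈ N, ‖x‖ < c → x ∈ f '' M)
    (hc : a * succMin R M j ≤ c) (hne : (succMinRadii R M j).Nonempty) :
    succMin R N j = a * succMin R M j := by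
  have hne' : (succMinRadii R (f '' M) j).Nonempty := by
    rw [succMinRadii_image_eq_smul f ha hf]
    exact hne.smul_set
  rw [← succMin_image_eq_mul f ha hf] at hc ⊢
  exact le_antisymm (succMin_le_of_subset hfMN hne')
    (le_succMin_of_forall_norm_lt_mem (hne'.mono (succMinRadii_subset_of_subset hfMN)) hN hc)

end Ring

section DivisionRing

variable [DivisionRing R] [Module R V]

theorem succMin_le_of_le_rank_span {S : Set V} (hSM : S ⊆ M) (hS : ∀ x ∈ S, ‖x‖ ≤ lam)
    (hlam : 0 < lam) (hi : (i : Cardinal) ≤ Module.rank R (span R S)) : succMin R M i ≤ lam := by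
  obtain ⟨b, hbS, hspan, hb⟩ := exists_linearIndependent R S
  obtain ⟨e⟩ : Nonempty (Fin i ↪ b) := by
    rw [← Cardinal.lift_mk_le'.{0}, Cardinal.mk_fin, Cardinal.lift_natCast, Cardinal.lift_uzero]
    rwa [← hspan, rank_span_set hb] at hi
  exact succMin_le_of_mem ⟨hlam, fun j ↦ e j, fun j ↦ hSM (hbS (e j).2), hb.comp _ e.injective,
    fun j ↦ hS _ (hbS (e j).2)⟩

theorem succMin_le_add_of_forall_exists_norm_sub_le {ι : Type*} (Y : ι → V) (hYN : ∀ j, Y j ∈ N)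
    (hY : ∀ j, ‖Y j‖ ≤ succMin R M i) (hne : (succMinRadii R M i).Nonempty) {ρ : ℝ} (hρ : 0 ≤ ρ)
    (hnear : ∀ x ∈ M, ∃ u ∈ N, x - u ∈ span R (range Y) ∧ ‖x - u‖ ≤ ρ) :
    succMin R N i ≤ succMin R M i + ρ := by
  refine succMin_le_add_of_forall hne fun lam hlam ↦ ?_
  have hmin := succMin_le_of_mem hlam
  obtain ⟨hlam0, v, hvM, hv, hvn⟩ := hlam
  choose u huN hu hun using fun j ↦ hnear (v j) (hvM j)
  have hvS : span R (range v) ≤ span R (range Y ∪ range u) := by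
    refine span_le.mpr (range_subset_iff.mpr fun j ↦ ?_)
    rw [← sub_add_cancel (v j) (u j)]
    exact add_mem (span_mono subset_union_left (hu j)) (subset_span (Or.inr ⟨j, rfl⟩))
  refine succMin_le_of_le_rank_span (S := range Y ∪ range u) ?_ ?_ (by positivity) ?_
  · rintro _ (⟨j, rfl⟩ | ⟨j, rfl⟩)
    exacts [hYN j, huN j]
  · rintro _ (⟨j, rfl⟩ | ⟨j, rfl⟩)
    · linarith [hY j]
    · calc ‖u j‖ = ‖v j - (v j - u j)‖ := by rw [sub_sub_cancel]
        _ ≤ ‖v j‖ + ‖v j - u j‖ := norm_sub_le _ _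
        _ ≤ lam + ρ := add_le_add (hvn j) (hun j)
  · have hcard := Cardinal.mk_range_eq_of_injective hv.injective
    rw [Cardinal.lift_uzero, Cardinal.mk_fin, Cardinal.lift_natCast] at hcard
    exact (rank_span hv ▸ hcard).ge.trans (rank_mono hvS)

end DivisionRing

end SuccMin

section ShortSpan

variable {K V : Type*} [DivisionRing K] [NormedAddCommGroup V] [Module K V] {L : Set V}
  {lam μ : ℝ} {k : ℕ}

def shortSpan (K : Type*) [DivisionRing K] {V : Type*} [NormedAddCommGroup V] [Module K V]
    (L : Set V) (lam : ℝ) : Submodule K V :=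
  span K {x | x ∈ L ∧ ‖x‖ ≤ lam}

theorem shortSpan_mono (h : lam ≤ μ) : shortSpan K L lam ≤ shortSpan K L μ :=
  span_mono fun _ hx ↦ ⟨hx.1, hx.2.trans h⟩

theorem shortSpan_eq_bot_of_nonpos (h : lam ≤ 0) : shortSpan K L lam = ⊥ :=
  span_eq_bot.mpr fun _ hx ↦ norm_le_zero_iff.mp (hx.2.trans h)

theorem rank_shortSpan_le (hlam : 0 < lam) (hlt : lam < succMin K L (k + 1)) :
    Module.rank K (shortSpan K L lam) ≤ k := by
  by_contra! h
  have := succMin_le_of_le_rank_span (M := L) (S := {x | x ∈ L ∧ ‖x‖ ≤ lam}) (i := k + 1)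
    (fun _ hx ↦ hx.1) (fun _ hx ↦ hx.2) hlam
    (by exact_mod_cast Cardinal.natCast_add_one_le_iff.mpr h)
  linarith

theorem finiteDimensional_shortSpan (hlam : 0 < lam) (hlt : lam < succMin K L (k + 1)) :
    FiniteDimensional K (shortSpan K L lam) :=
  Module.rank_lt_aleph0_iff.mp ((rank_shortSpan_le hlam hlt).trans_lt Cardinal.natCast_lt_aleph0)

theorem finrank_shortSpan_le (hlam : 0 < lam) (hlt : lam < succMin K L (k + 1)) :
    finrank K (shortSpan K L lam) ≤ k :=
  finrank_le_of_rank_le (rank_shortSpan_le hlam hlt)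

theorem mem_shortSpan_of_norm_lt (hk : k ≤ finrank K (shortSpan K L lam)) (hlam : 0 < lam)
    (hlt : lam < succMin K L (k + 1)) {x : V} (hx : x ∈ L) (hxn : ‖x‖ < succMin K L (k + 1)) :
    x ∈ shortSpan K L lam := by
  have hμ : max lam ‖x‖ < succMin K L (k + 1) := max_lt hlt hxn
  have hμ0 : 0 < max lam ‖x‖ := lt_max_of_lt_left hlam
  have := finiteDimensional_shortSpan hμ0 hμ
  rw [eq_of_le_of_finrank_le (shortSpan_mono (le_max_left lam ‖x‖))
    ((finrank_shortSpan_le hμ0 hμ).trans hk)]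
  exact subset_span ⟨hx, le_max_right _ _⟩

theorem exists_linearIndependent_span_eq_shortSpan (hlam : 0 < lam)
    (hlt : lam < succMin K L (k + 1)) (hk : finrank K (shortSpan K L lam) = k) :
    ∃ y : Fin k → V, (∀ j, y j ∈ L ∧ ‖y j‖ ≤ lam) ∧ span K (range y) = shortSpan K L lam ∧
      LinearIndependent K y := by
  have hy := @exists_fun_fin_finrank_span_eq K V _ _ _ _ (finiteDimensional_shortSpan hlam hlt)
  rwa [show span K _ = shortSpan K L lam from rfl, hk] at hy

end ShortSpan

section NearestPlane

variable {V : Type*} [NormedAddCommGroup V] [InnerProductSpace ℝ V]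

/-- Babai's nearest plane bound. -/
theorem exists_int_sum_smul_norm_sub_sq_le : ∀ {N : ℕ} (b : Fin N → V) {t : V},
    t ∈ span ℝ (range b) → ∃ z : Fin N → ℤ, ‖t - ∑ i, (z i : ℝ) • b i‖ ^ 2 ≤ (∑ i, ‖b i‖ ^ 2) / 4
  | 0, b, t, ht => ⟨0, by simp_all [range_eq_empty]⟩
  | N + 1, b, t, ht => by
    obtain ⟨c, rfl⟩ := (mem_span_range_iff_exists_fun ℝ).mp ht
    set W := span ℝ (range (b ∘ Fin.castSucc))
    have : FiniteDimensional ℝ W := .span_of_finite ℝ (finite_range _)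
    set u := ∑ i : Fin N, c i.castSucc • b i.castSucc
    set m := round (c (Fin.last N))
    set t' := u + (c (Fin.last N) - m) • b (Fin.last N)
    obtain ⟨z, hz⟩ := exists_int_sum_smul_norm_sub_sq_le (b ∘ Fin.castSucc)
      (W.starProjection_apply_mem t')
    set q := ∑ i : Fin N, (z i : ℝ) • b i.castSucc
    have hW : ∀ i, b (Fin.castSucc i) ∈ W := fun i ↦ subset_span (mem_range_self i)
    have hu : u ∈ W := sum_mem fun i _ ↦ smul_mem _ _ (hW i)
    have hq : q ∈ W := sum_mem fun i _ ↦ smul_mem _ _ (hW i)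
    -- the part of `t'` orthogonal to `W` only sees the rounding error of the last coordinate
    have hperp : t' - W.starProjection t' =
        (c (Fin.last N) - m) • Wᗮ.starProjection (b (Fin.last N)) := by
      rw [starProjection_orthogonal_val, map_add, map_smul,
        W.starProjection_eq_self_iff.mpr hu, smul_sub]
      simp only [t']
      abel
    have hsplit : ∑ i, c i • b i - ∑ i, ((Fin.snoc z m : Fin (N + 1) → ℤ) i : ℝ) • b i =
        (t' - W.starProjection t') + (W.starProjection t' - q) := by
      simp only [Fin.sum_univ_castSucc, Fin.snoc_castSucc, Fin.snoc_last, t', u, q, sub_smul]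
      abel
    have hpyth := norm_add_sq_eq_norm_sq_add_norm_sq_real (inner_left_of_mem_orthogonal
      (sub_mem (W.starProjection_apply_mem t') hq) (W.sub_starProjection_mem_orthogonal t'))
    have hlast : ‖t' - W.starProjection t'‖ ^ 2 ≤ ‖b (Fin.last N)‖ ^ 2 / 4 := by
      rw [hperp, norm_smul, Real.norm_eq_abs, mul_pow, sq_abs]
      have hround : (c (Fin.last N) - m) ^ 2 ≤ 1 / 4 := by
        rw [← sq_abs]
        nlinarith [abs_sub_round (c (Fin.last N)), abs_nonneg (c (Fin.last N) - m)]
      nlinarith [Wᗮ.norm_starProjection_apply_le (b (Fin.last N)),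
        norm_nonneg (Wᗮ.starProjection (b (Fin.last N))), sq_nonneg (c (Fin.last N) - m)]
    refine ⟨Fin.snoc z m, ?_⟩
    rw [hsplit, sq, hpyth, Fin.sum_univ_castSucc]
    simp only [Function.comp_apply] at hz
    linarith [sq ‖t' - W.starProjection t'‖, sq ‖W.starProjection t' - q‖]

theorem exists_mem_span_int_norm_sub_le {ι : Type*} [Fintype ι] (b : ι → V) {B : ℝ}
    (hb : ∀ i, ‖b i‖ ≤ B) {t : V} (ht : t ∈ span ℝ (range b)) :
    ∃ p ∈ span ℤ (range b), ‖t - p‖ ≤ √(Fintype.card ι) / 2 * B := by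
  set e := Fintype.equivFin ι
  have hbe : range (b ∘ e.symm) = range b := by rw [range_comp, e.symm.range_eq_univ, image_univ]
  obtain ⟨z, hz⟩ := exists_int_sum_smul_norm_sub_sq_le (b ∘ e.symm) (hbe ▸ ht)
  refine ⟨∑ i, (z i : ℝ) • b (e.symm i), sum_mem fun i _ ↦ ?_, ?_⟩
  · rw [Int.cast_smul_eq_zsmul]
    exact zsmul_mem (subset_span (mem_range_self _)) _
  have hR : 0 ≤ √(Fintype.card ι) / 2 * B := by
    rcases isEmpty_or_nonempty ι with hι | ⟨⟨i⟩⟩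
    · simp
    · have := (norm_nonneg _).trans (hb i)
      positivity
  refine (pow_le_pow_iff_left₀ (norm_nonneg _) hR two_ne_zero).mp (hz.trans ?_)
  have hsum : ∑ i, ‖(b ∘ e.symm) i‖ ^ 2 ≤ Fintype.card ι * B ^ 2 := by
    simpa using Finset.sum_le_card_nsmul (Finset.univ : Finset (Fin (Fintype.card ι))) _ (B ^ 2)
      fun i _ ↦ pow_le_pow_left₀ (norm_nonneg _) (hb _) 2
  rw [mul_pow, div_pow, Real.sq_sqrt (Nat.cast_nonneg _)]
  linarith

theorem exists_mem_norm_sub_le_of_sub_mem {W N : AddSubgroup V} {ι : Type*} [Fintype ι]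
    (b : ι → V) (hbW : ∀ j, b j ∈ W) (hbN : ∀ j, b j ∈ N) {B : ℝ} (hb : ∀ j, ‖b j‖ ≤ B)
    {x m : V} (hmW : m ∈ W) (hm : m ∈ span ℝ (range b)) (hxm : x - m ∈ N) :
    ∃ u ∈ N, x - u ∈ W ∧ ‖x - u‖ ≤ √(Fintype.card ι) / 2 * B := by
  obtain ⟨p, hp, hpm⟩ := exists_mem_span_int_norm_sub_le b hb hm
  have hpN : p ∈ N := span_le (p := N.toIntSubmodule).mpr (range_subset_iff.mpr hbN) hp
  have hpW : p ∈ W := span_le (p := W.toIntSubmodule).mpr (range_subset_iff.mpr hbW) hp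
  refine ⟨x - m + p, N.add_mem hxm hpN, ?_⟩
  rw [show x - (x - m + p) = m - p by abel]
  exact ⟨W.sub_mem hmW hpW, hpm⟩

end NearestPlane

theorem card_quotient_range_natCast_smul {P : Type*} [AddCommGroup P] [Module.Free ℤ P]
    [Module.Finite ℤ P] {n : ℕ} (hn : n ≠ 0) :
    Nat.card (P ⧸ LinearMap.range ((n : ℤ) • LinearMap.id : P →ₗ[ℤ] P)) = n ^ finrank ℤ P := by
  set f : P →ₗ[ℤ] P := (n : ℤ) • LinearMap.id
  have hf : Function.Injective f := smul_right_injective P (Int.natCast_ne_zero.mpr hn)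
  rw [← Submodule.natAbs_det_equiv (LinearMap.range f) (LinearEquiv.ofInjective f hf)]
  have : (LinearMap.range f).subtype ∘ₗ
      (LinearEquiv.ofInjective f hf : P →+ LinearMap.range f).toIntLinearMap = f := by
    ext; rfl
  rw [this, LinearMap.det_smul, LinearMap.det_id, mul_one, Int.natAbs_pow, Int.natAbs_natCast]

theorem NumberField.RingOfIntegers.card_quotient_span_natCast (K : Type*) [Field K]
    [NumberField K] (n : ℕ) : Nat.card (𝓞 K ⧸ Ideal.span {(n : 𝓞 K)}) = n ^ finrank ℚ K := by
  rw [← Submodule.cardQuot_apply, ← Ideal.absNorm_apply, Ideal.absNorm_span_singleton,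
    ← map_natCast (algebraMap ℤ (𝓞 K)), Algebra.norm_algebraMap, NumberField.RingOfIntegers.rank,
    Int.natAbs_pow, Int.natAbs_natCast]

theorem smul_mem_of_linearEquiv_pi_quotient {R M ι : Type*} [CommRing R] [AddCommGroup M]
    [Module R M] {N : Submodule R M} {a : R} (e : (M ⧸ N) ≃ₗ[R] (ι → R ⧸ Ideal.span {a}))
    (x : M) : a • x ∈ N := by
  rw [← Submodule.Quotient.mk_eq_zero, Submodule.Quotient.mk_smul]
  refine e.injective ?_
  ext i
  obtain ⟨c, hc⟩ := Ideal.Quotient.mk_surjective (e (Submodule.Quotient.mk x) i)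
  rw [map_smul, map_zero, Pi.smul_apply, ← hc, Pi.zero_apply, Algebra.smul_def,
    Ideal.Quotient.algebraMap_eq, ← map_mul, Ideal.Quotient.eq_zero_iff_mem]
  exact Ideal.mul_mem_right _ _ (Ideal.mem_span_singleton_self a)

theorem exists_sub_mem_of_card_quotient_le {R V : Type*} [Ring R] [AddCommGroup V] [Module R V]
    {L M N : Submodule R V} (hML : M ≤ L) [Finite (L ⧸ N.comap L.subtype)]
    (hcard : Nat.card (L ⧸ N.comap L.subtype) ≤ Nat.card (M ⧸ N.comap M.subtype))
    {x : V} (hx : x ∈ L) : ∃ m ∈ M, x - m ∈ N := by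
  set φ := (N.comap L.subtype).mkQ ∘ₗ Submodule.inclusion hML
  have hker : LinearMap.ker φ = N.comap M.subtype := by
    ext m
    simp [φ, Submodule.Quotient.mk_eq_zero]
  have hrange : LinearMap.range φ = ⊤ := by
    refine Submodule.toAddSubgroup_injective (AddSubgroup.eq_top_of_le_card _ ?_)
    rwa [← hker, Nat.card_congr φ.quotKerEquivRange.toEquiv] at hcard
  obtain ⟨m, hm⟩ := LinearMap.range_eq_top.mp hrange (Submodule.Quotient.mk ⟨x, hx⟩)
  refine ⟨m, m.2, ?_⟩
  have := (Submodule.Quotient.eq _).mp hm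
  simpa using N.neg_mem this

section FractionField

variable {R K V : Type*} [CommRing R] [Field K] [Algebra R K] [IsFractionRing R K]
  [AddCommGroup V] [Module R V] [Module K V] [IsScalarTower R K V]

theorem finrank_le_finrank_of_le_restrictScalars {N : Submodule R V} {W : Submodule K V}
    [FiniteDimensional K W] (h : N ≤ W.restrictScalars R) : finrank R N ≤ finrank K W := by
  refine finrank_le_of_rank_le (rank_le fun s hs ↦ ?_)
  have hK : LinearIndependent K fun x : s ↦ (x : V) :=
    (LinearIndependent.iff_fractionRing R K).mp (hs.map' N.subtype N.ker_subtype)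
  simpa using (LinearIndependent.of_comp W.subtype (v := fun x : s ↦
    (⟨x, h (x : N).2⟩ : W)) hK).fintype_card_le_finrank

theorem span_map_smul_id (M : Submodule R V) {c : R} (hc : c ≠ 0) :
    span K (M.map (c • LinearMap.id) : Set V) = span K M := by
  have hc' : algebraMap R K c ≠ 0 :=
    (map_ne_zero_iff _ (IsFractionRing.injective R K)).mpr hc
  refine le_antisymm (span_mono ?_) (span_le.mpr fun m hm ↦ ?_)
  · rintro _ ⟨m, hm, rfl⟩
    exact M.smul_mem c hm
  · have : algebraMap R K c • m ∈ span K (M.map (c • LinearMap.id) : Set V) := by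
      rw [algebraMap_smul]
      exact subset_span ⟨m, hm, rfl⟩
    have := smul_mem _ (algebraMap R K c)⁻¹ this
    rwa [smul_smul, inv_mul_cancel₀ hc', one_smul] at this

end FractionField

section LatticeShortSpan

variable {R K V : Type*} [CommRing R] [Field K] [Algebra R K] [NormedAddCommGroup V] [Module R V]
  [Module K V] [IsScalarTower R K V] {L N : Submodule R V} {lam : ℝ} {k : ℕ}

theorem span_inf_restrictScalars_shortSpan :
    span K ((L ⊓ (shortSpan K (L : Set V) lam).restrictScalars R : Submodule R V) : Set V) =
      shortSpan K L lam :=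
  le_antisymm (span_le.mpr fun _ hx ↦ hx.2) (span_mono fun _ hx ↦ ⟨hx.1, subset_span hx⟩)

theorem pos_of_le_restrictScalars_shortSpan [Nontrivial R] (hN : 0 < finrank R N)
    (h : N ≤ (shortSpan K (L : Set V) lam).restrictScalars R) : 0 < lam := by
  by_contra! hlam
  rw [shortSpan_eq_bot_of_nonpos hlam, restrictScalars_bot, le_bot_iff] at h
  rw [h, finrank_bot] at hN
  exact hN.false

variable [IsFractionRing R K]

theorem succMinRadii_nonempty_of_le_finrank [IsDomain R] (L : Submodule R V) [Module.Free R L]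
    [Module.Finite R L] {i : ℕ} (hi : i ≤ finrank R L) :
    (succMinRadii K (L : Set V) i).Nonempty :=
  succMinRadii_nonempty (fun j ↦ finBasis R L j) (fun j ↦ (finBasis R L j).2)
    ((LinearIndependent.iff_fractionRing R K).mp
      ((finBasis R L).linearIndependent.map' L.subtype L.ker_subtype)) hi

theorem finrank_shortSpan_eq (hN : finrank R N = k)
    (h : N ≤ (shortSpan K (L : Set V) lam).restrictScalars R) (hlam : 0 < lam)
    (hlt : lam < succMin K (L : Set V) (k + 1)) : finrank K (shortSpan K (L : Set V) lam) = k :=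
  have := finiteDimensional_shortSpan hlam hlt
  le_antisymm (finrank_shortSpan_le hlam hlt) (hN ▸ finrank_le_finrank_of_le_restrictScalars h)

end LatticeShortSpan

theorem mem_span_rat_of_mem_span_singleton {K V : Type*} [Field K] [NumberField K] [AddCommGroup V]
    [Module ℚ V] [Module K V] [IsScalarTower ℚ K V] {y x : V} (hy : y ≠ 0)
    {w : Fin (finrank ℚ K) → V} (hw : ∀ a, w a ∈ span K {y}) (hwind : LinearIndependent ℚ w)
    (hx : x ∈ span K {y}) : x ∈ span ℚ (range w) := by
  set W := span K {y}
  let w' : Fin (finrank ℚ K) → W := fun a ↦ ⟨w a, hw a⟩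
  have hw' : LinearIndependent ℚ w' := .of_comp (W.subtype.restrictScalars ℚ) hwind
  have : Module.Finite ℚ W := Module.Finite.trans K W
  have hspan : span ℚ (range w') = ⊤ := hw'.span_eq_top_of_card_eq_finrank' <| by
    rw [Fintype.card_fin, ← Module.finrank_mul_finrank ℚ K W, finrank_span_singleton hy, mul_one]
  have hmap : (span ℚ (range w')).map (W.subtype.restrictScalars ℚ) = span ℚ (range w) := by
    rw [map_span, ← range_comp]
    rfl
  exact hmap ▸ mem_map_of_mem (hspan ▸ mem_top : (⟨x, hx⟩ : W) ∈ span ℚ (range w'))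

section RingOfIntegers

variable {K V : Type*} [Field K] [NumberField K] [AddCommGroup V] [Module K V] [Module (𝓞 K) V]
  [IsScalarTower (𝓞 K) K V]

theorem exists_smul_eq_of_isPrimitiveIn {M Ln : Submodule (𝓞 K) V} {n : ℕ} (hn : n ≠ 0)
    (h : IsPrimitiveIn (M.map ((n : 𝓞 K) • LinearMap.id)) Ln) {x : V} (hx : x ∈ Ln)
    (hxM : x ∈ span K (M : Set V)) : ∃ m ∈ M, (n : 𝓞 K) • m = x := by
  have : x ∈ M.map ((n : 𝓞 K) • LinearMap.id) := by
    rw [h]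
    refine ⟨hx, show x ∈ span K _ from ?_⟩
    rwa [span_map_smul_id M (Nat.cast_ne_zero.mpr hn : (n : 𝓞 K) ≠ 0)]
  simpa using this

variable [Module ℚ V] [IsScalarTower ℚ K V]

theorem linearIndependent_ringOfIntegersBasis_smul {ι : Type*} {y : ι → V}
    (hy : LinearIndependent K y) :
    LinearIndependent ℚ fun p : Free.ChooseBasisIndex ℤ (𝓞 K) × ι ↦
      (NumberField.RingOfIntegers.basis K p.1 : 𝓞 K) • y p.2 := by
  convert linearIndependent_smul (NumberField.integralBasis K).linearIndependent hy using 2 with p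
  rw [NumberField.integralBasis_apply, algebraMap_smul]

theorem finrank_mul_card_le_finrank_int (M : Submodule (𝓞 K) V) [Module.Finite ℤ M] {ι : Type*}
    [Fintype ι] {y : ι → V} (hyM : ∀ j, y j ∈ M) (hy : LinearIndependent K y) :
    finrank ℚ K * Fintype.card ι ≤ finrank ℤ M := by
  have hZ := (LinearIndependent.iff_fractionRing ℤ ℚ).mpr
    (linearIndependent_ringOfIntegersBasis_smul hy)
  have := (LinearIndependent.of_comp (M.subtype.restrictScalars ℤ)
    (v := fun p : Free.ChooseBasisIndex ℤ (𝓞 K) × ι ↦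
      (⟨_, M.smul_mem (NumberField.RingOfIntegers.basis K p.1) (hyM p.2)⟩ : M))
    hZ).fintype_card_le_finrank
  rwa [Fintype.card_prod, ← finrank_eq_card_chooseBasisIndex,
    NumberField.RingOfIntegers.rank] at this

theorem exists_sub_mem_of_linearEquiv_pi_quotient {L M N : Submodule (𝓞 K) V}
    [Module.Finite (𝓞 K) L] (hML : M ≤ L) {n k : ℕ} (hn : n ≠ 0)
    (e : (L ⧸ N.comap L.subtype) ≃ₗ[𝓞 K] (Fin k → 𝓞 K ⧸ Ideal.span {(n : 𝓞 K)}))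
    (hMN : ∀ x ∈ M, x ∈ N ↔ ∃ m ∈ M, (n : 𝓞 K) • m = x)
    {y : Fin k → V} (hyM : ∀ j, y j ∈ M) (hy : LinearIndependent K y) {x : V} (hx : x ∈ L) :
    ∃ m ∈ M, x - m ∈ N := by
  have : Module.Finite (𝓞 K) M :=
    .of_injective (Submodule.inclusion hML) (Submodule.inclusion_injective hML)
  have : Module.Finite ℤ M := .trans (𝓞 K) M
  have : IsAddTorsionFree V :=
    Module.isTorsionFree_int_iff_isAddTorsionFree.mp (Module.IsTorsionFree.trans (R := ℚ))
  have : Module.Free ℤ M := Module.free_of_finite_type_torsion_free'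
  have hcardL : Nat.card (L ⧸ N.comap L.subtype) = n ^ (finrank ℚ K * k) := by
    rw [Nat.card_congr e.toEquiv, Nat.card_pi, Finset.prod_const, Finset.card_univ,
      Fintype.card_fin, NumberField.RingOfIntegers.card_quotient_span_natCast, pow_mul]
  have : Finite (L ⧸ N.comap L.subtype) := Nat.finite_of_card_ne_zero (hcardL ▸ pow_ne_zero _ hn)
  have hsmul : ∀ y : M, (((n : ℤ) • y : M) : V) = (n : 𝓞 K) • (y : V) := fun y ↦ by
    rw [AddSubgroupClass.coe_zsmul, natCast_zsmul, Nat.cast_smul_eq_nsmul]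
  have hMN' : (N.comap M.subtype).restrictScalars ℤ = LinearMap.range ((n : ℤ) • LinearMap.id) := by
    ext m
    simp only [restrictScalars_mem, mem_comap, subtype_apply, hMN _ m.2, LinearMap.mem_range,
      LinearMap.smul_apply, LinearMap.id_apply, Subtype.ext_iff, hsmul]
    exact ⟨fun ⟨y, hy, h⟩ ↦ ⟨⟨y, hy⟩, h⟩, fun ⟨y, h⟩ ↦ ⟨y, y.2, h⟩⟩
  refine exists_sub_mem_of_card_quotient_le hML ?_ hx
  rw [hcardL, ← Nat.card_congr (Submodule.Quotient.restrictScalarsEquiv ℤ _).toEquiv, hMN',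
    card_quotient_range_natCast_smul hn]
  exact Nat.pow_le_pow_right (Nat.pos_of_ne_zero hn)
    (by simpa using finrank_mul_card_le_finrank_int M hyM hy)

end RingOfIntegers

theorem natCast_smul_id_apply {K S V : Type*} [CommSemiring K] [Semiring S] [AddCommGroup V]
    [Module K V] [Module S V] (n : ℕ) (x : V) :
    ((n : K) • LinearMap.id : V →ₗ[K] V) x = (n : S) • x := by
  rw [LinearMap.smul_apply, LinearMap.id_apply, Nat.cast_smul_eq_nsmul K, Nat.cast_smul_eq_nsmul S]

theorem image_natCast_smul_id_subset {K S V : Type*} [CommSemiring K] [Semiring S]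
    [AddCommGroup V] [Module K V] [Module S V] {L N : Set V} {n : ℕ}
    (hLN : ∀ x ∈ L, (n : S) • x ∈ N) : ((n : K) • LinearMap.id : V →ₗ[K] V) '' L ⊆ N := by
  rintro _ ⟨x, hx, rfl⟩
  exact natCast_smul_id_apply (K := K) (S := S) n x ▸ hLN x hx

section Scaling

variable {K V : Type*} [Field K] [NormedAddCommGroup V] [NormedSpace ℝ V] [Module K V]

theorem norm_natCast_smul_id_apply (n : ℕ) (x : V) :
    ‖((n : K) • LinearMap.id : V →ₗ[K] V) x‖ = n * ‖x‖ := by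
  rw [LinearMap.smul_apply, LinearMap.id_apply, Nat.cast_smul_eq_nsmul,
    ← Nat.cast_smul_eq_nsmul ℝ, norm_smul, Real.norm_natCast]

variable {S : Type*} [Semiring S] [Module S V] {L N : Set V} {n i : ℕ}

theorem succMin_le_succMin_of_natCast_smul_mem (hn : n ≠ 0) (hNL : N ⊆ L)
    (hLN : ∀ x ∈ L, (n : S) • x ∈ N) (hne : (succMinRadii K L i).Nonempty) :
    succMin K L i ≤ succMin K N i := by
  have hne' : (succMinRadii K (((n : K) • LinearMap.id : V →ₗ[K] V) '' L) i).Nonempty := by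
    rw [succMinRadii_image_eq_smul _ (by positivity) (norm_natCast_smul_id_apply n)]
    exact hne.smul_set
  exact succMin_le_of_subset hNL
    (hne'.mono (succMinRadii_subset_of_subset (image_natCast_smul_id_subset hLN)))

theorem succMin_eq_natCast_mul_of_forall_norm_lt (hn : n ≠ 0) {c : ℝ}
    (hLN : ∀ x ∈ L, (n : S) • x ∈ N) (hN : ∀ x ∈ N, ‖x‖ < c → ∃ y ∈ L, (n : S) • y = x)
    (hc : n * succMin K L i ≤ c) (hne : (succMinRadii K L i).Nonempty) :
    succMin K N i = n * succMin K L i :=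
  succMin_eq_mul_of_forall_norm_lt_mem_image _ (by positivity) (norm_natCast_smul_id_apply n)
    (image_natCast_smul_id_subset hLN)
    (fun x hx hxn ↦ let ⟨y, hy, hyx⟩ := hN x hx hxn
      ⟨y, hy, natCast_smul_id_apply (K := K) (S := S) n y ▸ hyx⟩)
    hc hne

end Scaling

section Covering

variable {K V : Type*} [Field K] [NumberField K] [NormedAddCommGroup V] [Module ℚ V] [Module K V]
  [IsScalarTower ℚ K V] [Module (𝓞 K) V] [IsScalarTower (𝓞 K) K V]

theorem exists_linearIndependent_rat_norm_le {Y : V} (hY : Y ≠ 0) {Γ δ : ℝ} (hΓ0 : 0 ≤ Γ)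
    (hδ : 0 < δ) (hΓ : succMin ℚ (span (𝓞 K) {Y} : Set V) (finrank ℚ K) ≤
      Γ * succMin ℚ (span (𝓞 K) {Y} : Set V) 1) :
    ∃ w : Fin (finrank ℚ K) → V, (∀ a, w a ∈ span (𝓞 K) {Y}) ∧ LinearIndependent ℚ w ∧
      ∀ a, ‖w a‖ ≤ Γ * ‖Y‖ + δ := by
  have hcard : Fintype.card (Free.ChooseBasisIndex ℤ (𝓞 K) × Unit) = finrank ℚ K := by
    rw [Fintype.card_prod, Fintype.card_unit, mul_one, ← finrank_eq_card_chooseBasisIndex,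
      NumberField.RingOfIntegers.rank]
  set e := (Fintype.equivFinOfCardEq hcard).symm
  have hind : LinearIndependent ℚ fun a ↦ (NumberField.RingOfIntegers.basis K (e a).1 : 𝓞 K) • Y :=
    (linearIndependent_ringOfIntegersBasis_smul (y := fun _ : Unit ↦ Y)
      (.of_subsingleton () hY)).comp e e.injective
  have hne : (succMinRadii ℚ (span (𝓞 K) {Y} : Set V) (finrank ℚ K)).Nonempty :=
    succMinRadii_nonempty _ (fun a ↦ smul_mem _ _ (mem_span_singleton_self Y)) hind le_rfl
  have h1 : succMin ℚ (span (𝓞 K) {Y} : Set V) 1 ≤ ‖Y‖ :=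
    succMin_le_of_mem ⟨norm_pos_iff.mpr hY, fun _ ↦ Y, fun _ ↦ mem_span_singleton_self Y,
      linearIndependent_unique_iff.mpr hY, fun _ ↦ le_rfl⟩
  obtain ⟨w, hwS, hw, hwn⟩ := exists_linearIndependent_of_succMin_lt hne
    (c := Γ * ‖Y‖ + δ) (by nlinarith)
  exact ⟨w, hwS, hw, fun a ↦ (hwn a).le⟩

variable [InnerProductSpace ℝ V] {N : Submodule (𝓞 K) V} {k : ℕ} {Γ c : ℝ}

theorem exists_mem_norm_sub_le_of_sub_mem_span {δ : ℝ} (hΓ0 : 0 ≤ Γ) (hδ : 0 < δ)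
    (hΓ : ∀ x ∈ N, x ≠ 0 → succMin ℚ (span (𝓞 K) {x} : Set V) (finrank ℚ K) ≤
      Γ * succMin ℚ (span (𝓞 K) {x} : Set V) 1)
    (Y : Fin k → V) (hYN : ∀ j, Y j ∈ N) (hY0 : ∀ j, Y j ≠ 0) (hYc : ∀ j, ‖Y j‖ ≤ c)
    {x m : V} (hm : m ∈ span K (range Y)) (hxm : x - m ∈ N) :
    ∃ u ∈ N, x - u ∈ span K (range Y) ∧
      ‖x - u‖ ≤ √((k * finrank ℚ K : ℕ) : ℝ) / 2 * (Γ * c + δ) := by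
  choose w hwY hw hwn using fun j ↦
    exists_linearIndependent_rat_norm_le (hY0 j) hΓ0 hδ (hΓ _ (hYN j) (hY0 j))
  set b : Fin k × Fin (finrank ℚ K) → V := fun p ↦ w p.1 p.2
  have hbK : ∀ p, b p ∈ span K {Y p.1} := fun p ↦ span_le_restrictScalars (𝓞 K) K _ (hwY _ _)
  have hbN : ∀ p, b p ∈ N := fun p ↦ span_le.mpr (singleton_subset_iff.mpr (hYN p.1)) (hwY _ _)
  have hbW : ∀ p, b p ∈ span K (range Y) := fun p ↦
    span_mono (singleton_subset_iff.mpr (mem_range_self p.1)) (hbK p)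
  have hmb : m ∈ span ℝ (range b) := by
    obtain ⟨a, rfl⟩ := (mem_span_range_iff_exists_fun K).mp hm
    refine span_le_restrictScalars ℚ ℝ _ (sum_mem fun j _ ↦ ?_)
    refine span_mono (range_subset_iff.mpr fun a ↦ mem_range_self (j, a)) ?_
    exact mem_span_rat_of_mem_span_singleton (hY0 j) (fun a ↦ hbK (j, a)) (hw j)
      (smul_mem _ _ (mem_span_singleton_self _))
  have hB : ∀ p, ‖b p‖ ≤ Γ * c + δ := fun p ↦ (hwn p.1 p.2).trans (by gcongr; exact hYc p.1)
  simpa using exists_mem_norm_sub_le_of_sub_mem (W := (span K (range Y)).toAddSubgroup)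
    (N := N.toAddSubgroup) b hbW hbN hB hm hmb hxm

theorem succMin_le_add_of_forall_exists_sub_mem_span {L : Set V} {i : ℕ} (hΓ0 : 0 ≤ Γ)
    (hΓ : ∀ x ∈ N, x ≠ 0 → succMin ℚ (span (𝓞 K) {x} : Set V) (finrank ℚ K) ≤
      Γ * succMin ℚ (span (𝓞 K) {x} : Set V) 1)
    (Y : Fin k → V) (hYN : ∀ j, Y j ∈ N) (hY0 : ∀ j, Y j ≠ 0) (hYc : ∀ j, ‖Y j‖ ≤ c)
    (hc : c ≤ succMin K L i) (hne : (succMinRadii K L i).Nonempty)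
    (hdecomp : ∀ x ∈ L, ∃ m ∈ span K (range Y), x - m ∈ N) :
    succMin K (N : Set V) i ≤ succMin K L i + √((k * finrank ℚ K : ℕ) : ℝ) / 2 * (Γ * c) := by
  set s := √((k * finrank ℚ K : ℕ) : ℝ) / 2
  have hcover : ∀ δ > 0, succMin K (N : Set V) i ≤ succMin K L i + s * (Γ * c + δ) := by
    intro δ hδ
    have hρ : 0 ≤ s * (Γ * c + δ) := by
      obtain rfl | hk := Nat.eq_zero_or_pos k
      · simp [s]
      · have := (norm_nonneg _).trans (hYc ⟨0, hk⟩)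
        positivity
    refine succMin_le_add_of_forall_exists_norm_sub_le Y hYN (fun j ↦ (hYc j).trans hc) hne hρ
      fun x hx ↦ ?_
    obtain ⟨m, hm, hxm⟩ := hdecomp x hx
    exact exists_mem_norm_sub_le_of_sub_mem_span hΓ0 hδ hΓ Y hYN hY0 hYc hm hxm
  refine le_of_forall_pos_le_add fun ε hε ↦ ?_
  have hs : 0 ≤ s := by positivity
  have hδ : s * (ε / (s + 1)) ≤ ε := by
    rw [mul_div_assoc']
    exact div_le_of_le_mul₀ (by positivity) hε.le (by nlinarith)
  linarith [hcover (ε / (s + 1)) (by positivity)]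

theorem succMin_le_mul_of_forall_exists_sub_mem_span {L : Set V} {i n : ℕ} (hn : n ≠ 0)
    (hΓ0 : 0 ≤ Γ) (hΓ : ∀ x ∈ N, x ≠ 0 → succMin ℚ (span (𝓞 K) {x} : Set V) (finrank ℚ K) ≤
      Γ * succMin ℚ (span (𝓞 K) {x} : Set V) 1)
    (y : Fin k → V) (hy : LinearIndependent K y) (hyN : ∀ j, (n : 𝓞 K) • y j ∈ N)
    (hyc : ∀ j, ‖y j‖ ≤ c) (hc : n * c ≤ succMin K L i) (hne : (succMinRadii K L i).Nonempty)
    (hdecomp : ∀ x ∈ L, ∃ m ∈ span K (range y), x - m ∈ N) :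
    succMin K (N : Set V) i ≤
      (1 + Γ * √((k * finrank ℚ K : ℕ) : ℝ) / 2) * succMin K L i := by
  have hny : ∀ j, ‖(n : 𝓞 K) • y j‖ = n * ‖y j‖ := fun j ↦ by
    rw [Nat.cast_smul_eq_nsmul, ← Nat.cast_smul_eq_nsmul ℝ, norm_smul, Real.norm_natCast]
  have hY0 : ∀ j, (n : 𝓞 K) • y j ≠ 0 := fun j ↦ norm_pos_iff.mp <|
    hny j ▸ mul_pos (by positivity) (norm_pos_iff.mpr (hy.ne_zero j))
  have hspan : span K (range fun j ↦ (n : 𝓞 K) • y j) = span K (range y) := by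
    simp_rw [← algebraMap_smul K (n : 𝓞 K), Set.range_smul]
    exact span_smul_eq_of_isUnit _ _ (IsUnit.mk0 _ (by simpa using hn))
  calc succMin K (N : Set V) i
      ≤ succMin K L i + √((k * finrank ℚ K : ℕ) : ℝ) / 2 * (Γ * (n * c)) :=
        succMin_le_add_of_forall_exists_sub_mem_span hΓ0 hΓ _ hyN hY0
          (fun j ↦ hny j ▸ by gcongr; exact hyc j) hc hne (hspan ▸ hdecomp)
    _ ≤ succMin K L i + √((k * finrank ℚ K : ℕ) : ℝ) / 2 * (Γ * succMin K L i) := by gcongr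
    _ = _ := by ring

end Covering

theorem stmt19_general
    {K : Type*} [Field K] [NumberField K]
    {V : Type*} [NormedAddCommGroup V] [InnerProductSpace ℝ V]
    [Module ℚ V] [Module K V] [Module (𝓞 K) V]
    [IsScalarTower ℚ K V] [IsScalarTower (𝓞 K) K V]
    (r : ℕ)
    (L : Submodule (𝓞 K) V)
    [Module.Free (𝓞 K) L] (hrank : Module.finrank (𝓞 K) L = r)
    (Γ : ℝ) (hΓ1 : 1 ≤ Γ)
    (hΓ : ∀ x ∈ L, x ≠ 0 →
      succMin ℚ ((Submodule.span (𝓞 K) {x} : Submodule (𝓞 K) V) : Set V)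
          (Module.finrank ℚ K) ≤
        Γ * succMin ℚ ((Submodule.span (𝓞 K) {x} : Submodule (𝓞 K) V) : Set V) 1)
    (n : ℕ) (hn : 2 ≤ n)
    (k : ℕ) (hk1 : 1 ≤ k) (hkr : k < r)
    (hgap : (n : ℝ) * succMin K (L : Set V) k ≤ succMin K (L : Set V) (k + 1))
    (M : Submodule (𝓞 K) V)
    (hMrank : Module.finrank (𝓞 K) M = k)
    (hM : M = L ⊓ (Submodule.span K
        {x : V | x ∈ L ∧ ‖x‖ ≤ succMin K (L : Set V) k}).restrictScalars (𝓞 K))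
    (Ln : Submodule (𝓞 K) V) (hLnL : Ln ≤ L)
    (hquot : Nonempty ((↥L ⧸ Ln.comap L.subtype) ≃ₗ[𝓞 K]
        (Fin k → (𝓞 K ⧸ Ideal.span {(n : 𝓞 K)}))))
    (hprim : IsPrimitiveIn
        (M.map ((n : 𝓞 K) • (LinearMap.id : V →ₗ[𝓞 K] V))) Ln) :
    (∀ i : ℕ, 1 ≤ i → i ≤ k →
        succMin K (Ln : Set V) i = (n : ℝ) * succMin K (L : Set V) i) ∧
      ∀ i : ℕ, k + 1 ≤ i → i ≤ r →
        succMin K (L : Set V) i ≤ succMin K (Ln : Set V) i ∧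
          succMin K (Ln : Set V) i ≤
            (1 + Γ * Real.sqrt ((k * Module.finrank ℚ K : ℕ) : ℝ) / 2) *
              succMin K (L : Set V) i := by
  set W := shortSpan K (L : Set V) (succMin K (L : Set V) k)
  change M = L ⊓ W.restrictScalars (𝓞 K) at hM
  have hn0 : n ≠ 0 := by omega
  have hML : M ≤ L := hM ▸ inf_le_left
  have hMW : M ≤ W.restrictScalars (𝓞 K) := hM ▸ inf_le_right
  have : Module.Finite (𝓞 K) L := Module.finite_of_finrank_pos (by omega)
  have hne : ∀ i ≤ r, (succMinRadii K (L : Set V) i).Nonempty := fun i hi ↦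
    succMinRadii_nonempty_of_le_finrank L (hrank ▸ hi)
  have hpos : 0 < succMin K (L : Set V) k := pos_of_le_restrictScalars_shortSpan (by omega) hMW
  have hgap' : succMin K (L : Set V) k < succMin K (L : Set V) (k + 1) := by
    have : (2 : ℝ) ≤ n := by exact_mod_cast hn
    nlinarith
  have hWk : finrank K W = k := finrank_shortSpan_eq hMrank hMW hpos hgap'
  have hspanM : span K (M : Set V) = W := hM ▸ span_inf_restrictScalars_shortSpan
  have hnM : ∀ x ∈ Ln, x ∈ W → ∃ m ∈ M, (n : 𝓞 K) • m = x := fun x hx hxW ↦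
    exists_smul_eq_of_isPrimitiveIn hn0 hprim hx (hspanM ▸ hxW)
  have hnMLn : ∀ m ∈ M, (n : 𝓞 K) • m ∈ Ln := fun m hm ↦ (hprim.le ⟨m, hm, rfl⟩).1
  have hLLn : ∀ x ∈ L, (n : 𝓞 K) • x ∈ Ln := fun x hx ↦
    smul_mem_of_linearEquiv_pi_quotient hquot.some ⟨x, hx⟩
  refine ⟨fun i hi hik ↦ ?_, fun i hi hir ↦
    ⟨succMin_le_succMin_of_natCast_smul_mem hn0 hLnL hLLn (hne i hir), ?_⟩⟩
  · refine succMin_eq_natCast_mul_of_forall_norm_lt hn0 hLLn (fun x hx hxn ↦ ?_)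
      (hgap.trans' ?_) (hne i (by omega))
    · obtain ⟨m, hm, rfl⟩ := hnM x hx (mem_shortSpan_of_norm_lt hWk.ge hpos hgap' (hLnL hx) hxn)
      exact ⟨m, hML hm, rfl⟩
    · gcongr
      exact succMin_le_of_le hik (hne k hkr.le)
  · obtain ⟨y, hyS, hyW, hy⟩ := exists_linearIndependent_span_eq_shortSpan hpos hgap' hWk
    have hyM : ∀ j, y j ∈ M := fun j ↦ hM ▸ ⟨(hyS j).1, subset_span (hyS j)⟩
    refine succMin_le_mul_of_forall_exists_sub_mem_span hn0 (by linarith)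
      (fun x hx ↦ hΓ x (hLnL hx)) y hy (fun j ↦ hnMLn _ (hyM j)) (fun j ↦ (hyS j).2)
      (hgap.trans (succMin_le_of_le hi (hne i hir))) (hne i hir) fun x hx ↦ ?_
    obtain ⟨m, hm, hxm⟩ := exists_sub_mem_of_linearEquiv_pi_quotient hML hn0 hquot.some
      (fun x hx ↦ ⟨fun h ↦ hnM x h (hMW hx), fun ⟨m, hm, h⟩ ↦ h ▸ hnMLn m hm⟩) hyM hy hx
    exact ⟨m, hyW ▸ hMW hm, hxm⟩

/-- closing one gap. Let `L` be a rank-`r` module lattice over a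
number field `K` of degree `d`, `n ≥ 2`, and suppose `λ^K_{k+1}(L) ≥ n λ^K_k(L)`
for some `k < r`. Let `M` be the primitive rank-`k` sub-module containing all
vectors of length at most `λ^K_k(L)`, and `L_n ⊆ L` with
`L/L_n ≅ (𝓞_K/n𝓞_K)^k` and `nM` primitive in `L_n`. Then
`λ^K_i(L_n) = n λ^K_i(L)` for `i ≤ k`, and
`λ^K_i(L) ≤ λ^K_i(L_n) ≤ (1 + Γ_K √(kd)/2) λ^K_i(L)` for `k+1 ≤ i ≤ r`. -/
theorem stmt19
    {K : Type*} [Field K] [NumberField K]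
    {V : Type*} [NormedAddCommGroup V] [InnerProductSpace ℝ V] [FiniteDimensional ℝ V]
    [Module ℚ V] [Module K V] [Module (𝓞 K) V]
    [IsScalarTower ℚ K V] [IsScalarTower (𝓞 K) K V]
    (r : ℕ) (hr : 0 < r)
    (L : Submodule (𝓞 K) V) [DiscreteTopology L]
    [Module.Free (𝓞 K) L] (hrank : Module.finrank (𝓞 K) L = r)
    (Γ : ℝ) (hΓ1 : 1 ≤ Γ)
    (hΓ : ∀ x ∈ L, x ≠ 0 →
      succMin ℚ ((Submodule.span (𝓞 K) {x} : Submodule (𝓞 K) V) : Set V)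
          (Module.finrank ℚ K) ≤
        Γ * succMin ℚ ((Submodule.span (𝓞 K) {x} : Submodule (𝓞 K) V) : Set V) 1)
    (n : ℕ) (hn : 2 ≤ n)
    (k : ℕ) (hk1 : 1 ≤ k) (hkr : k < r)
    (hgap : (n : ℝ) * succMin K (L : Set V) k ≤ succMin K (L : Set V) (k + 1))
    (M : Submodule (𝓞 K) V)
    (hMrank : Module.finrank (𝓞 K) M = k)
    (hM : M = L ⊓ (Submodule.span K
        {x : V | x ∈ L ∧ ‖x‖ ≤ succMin K (L : Set V) k}).restrictScalars (𝓞 K))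
    (Ln : Submodule (𝓞 K) V) (hLnL : Ln ≤ L)
    (hquot : Nonempty ((↥L ⧸ Ln.comap L.subtype) ≃ₗ[𝓞 K]
        (Fin k → (𝓞 K ⧸ Ideal.span {(n : 𝓞 K)}))))
    (hprim : IsPrimitiveIn
        (M.map ((n : 𝓞 K) • (LinearMap.id : V →ₗ[𝓞 K] V))) Ln) :
    (∀ i : ℕ, 1 ≤ i → i ≤ k →
        succMin K (Ln : Set V) i = (n : ℝ) * succMin K (L : Set V) i) ∧
      ∀ i : ℕ, k + 1 ≤ i → i ≤ r →
        succMin K (L : Set V) i ≤ succMin K (Ln : Set V) i ∧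
          succMin K (Ln : Set V) i ≤
            (1 + Γ * Real.sqrt ((k * Module.finrank ℚ K : ℕ) : ℝ) / 2) *
              succMin K (L : Set V) i :=
  stmt19_general r L hrank Γ hΓ1 hΓ n hn k hk1 hkr hgap M hMrank hM Ln hLnL hquot hprim
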